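/- Let γ ∈ (0,1], C > 0 and C̃ > 0. Define C_k = C^k ∏_{l=1}^{k-1} B(lγ/2, γ/2) (empty product equal to 1), and C̃_1 = C̃, C̃_{k+1} = (C_k C̃ + C C̃_k) B(kγ/2, γ/2) for k ≥ 1. Then there exists a constant D > 0, depending only on C, C̃ and γ, such that for every k ≥ 1, C̃_k ≤ k · D^k · (k!)^{-γ/2}. -/
import Mathlib


open MeasureTheory

/-- The Euler Beta function `B(a,b) = ∫₀¹ u^{a-1}(1-u)^{b-1} du`. -/
noncomputable def Beta (a b : ℝ) : ℝ :=
  ∫ u in (0:ℝ)..1, u ^ (a - 1) * (1 - u) ^ (b - 1)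

/-- The parametrix constants `C_k = C^k ∏_{l=1}^{k-1} B(lγ/2, γ/2)`. -/
noncomputable def Cpar (γ C : ℝ) (k : ℕ) : ℝ :=
  C ^ k * ∏ l ∈ Finset.Icc 1 (k - 1), Beta ((l : ℝ) * γ / 2) (γ / 2)

/-- The sequence `C̃_1 = C̃`, `C̃_{k+1} = (C_k C̃ + C C̃_k) B(kγ/2, γ/2)` (value at `0` is junk). -/
noncomputable def Ctil (γ C Ct : ℝ) : ℕ → ℝ
  | 0 => 0
  | 1 => Ct
  | (k + 2) =>
      (Cpar γ C (k + 1) * Ct + C * Ctil γ C Ct (k + 1)) *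
        Beta (((k : ℝ) + 1) * γ / 2) (γ / 2)

/-- The Beta function in terms of the Gamma function. -/
lemma Beta_eq {a b : ℝ} (ha : 0 < a) (hb : 0 < b) :
    Beta a b = Real.Gamma a * Real.Gamma b / Real.Gamma (a + b) := by
  have key : Complex.betaIntegral a b = (Beta a b : ℂ) := by
    rw [Beta, ← intervalIntegral.integral_ofReal]
    refine intervalIntegral.integral_congr fun x hx => ?_
    rw [Set.uIcc_of_le zero_le_one] at hx
    rw [Complex.ofReal_mul, Complex.ofReal_cpow hx.1 (a - 1),
      Complex.ofReal_cpow (by linarith [hx.2] : (0:ℝ) ≤ 1 - x) (b - 1)]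
    push_cast
    ring
  have h := Complex.Gamma_mul_Gamma_eq_betaIntegral
    (s := (a:ℂ)) (t := (b:ℂ)) (by simpa using ha) (by simpa using hb)
  rw [key, ← Complex.ofReal_add, Complex.Gamma_ofReal, Complex.Gamma_ofReal,
    Complex.Gamma_ofReal] at h
  have h' : Real.Gamma a * Real.Gamma b = Real.Gamma (a + b) * Beta a b := by
    exact_mod_cast h
  have hpos : 0 < Real.Gamma (a + b) := Real.Gamma_pos_of_pos (by linarith)
  field_simp
  linarith [h']

lemma Beta_pos {a b : ℝ} (ha : 0 < a) (hb : 0 < b) : 0 < Beta a b := by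
  rw [Beta_eq ha hb]
  have h1 := Real.Gamma_pos_of_pos ha
  have h2 := Real.Gamma_pos_of_pos hb
  have h3 := Real.Gamma_pos_of_pos (show (0:ℝ) < a + b by linarith)
  positivity

/-- Log-convexity of the Gamma function gives `Γ(a+1) ≤ Γ(a+b) (a+b)^(1-b)`. -/
lemma Gamma_conv {a b : ℝ} (ha : 0 < a) (hb : 0 < b) (hb1 : b ≤ 1) :
    Real.Gamma (a + 1) ≤ Real.Gamma (a + b) * (a + b) ^ (1 - b) := by
  have hab : 0 < a + b := by linarith
  have hG : 0 < Real.Gamma (a + b) := Real.Gamma_pos_of_pos hab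
  have hconv := Real.convexOn_log_Gamma.2 (Set.mem_Ioi.mpr hab)
    (Set.mem_Ioi.mpr (by linarith : (0:ℝ) < a + b + 1)) hb.le (by linarith : (0:ℝ) ≤ 1 - b)
    (by ring)
  simp only [smul_eq_mul, Function.comp_apply] at hconv
  have heq : b * (a + b) + (1 - b) * (a + b + 1) = a + 1 := by ring
  rw [heq] at hconv
  have hG1 : Real.Gamma (a + b + 1) = (a + b) * Real.Gamma (a + b) :=
    Real.Gamma_add_one hab.ne'
  rw [hG1, Real.log_mul hab.ne' hG.ne'] at hconv
  have h2 : Real.log (Real.Gamma (a + 1)) ≤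
      Real.log (Real.Gamma (a + b)) + (1 - b) * Real.log (a + b) := by linarith
  have hG2 : 0 < Real.Gamma (a + 1) := Real.Gamma_pos_of_pos (by linarith)
  calc Real.Gamma (a + 1) = Real.exp (Real.log (Real.Gamma (a + 1))) := (Real.exp_log hG2).symm
    _ ≤ Real.exp (Real.log (Real.Gamma (a + b)) + (1 - b) * Real.log (a + b)) :=
        Real.exp_le_exp.mpr h2
    _ = Real.Gamma (a + b) * (a + b) ^ (1 - b) := by
        rw [Real.exp_add, Real.exp_log hG, Real.rpow_def_of_pos hab, mul_comm (1-b)]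

/-- The key analytic estimate: `B(xγ/2, γ/2) ≤ K (x+1)^{-γ/2}` uniformly for `x ≥ 1`. -/
lemma Beta_bound {γ : ℝ} (hγ0 : 0 < γ) (hγ1 : γ ≤ 1) :
    ∃ K : ℝ, 1 ≤ K ∧ ∀ x : ℝ, 1 ≤ x →
      Beta (x * γ / 2) (γ / 2) ≤ K * (x + 1) ^ (-(γ / 2)) := by
  set b := γ / 2 with hbdef
  have hb : 0 < b := by positivity
  have hb1 : b ≤ 1 := by rw [hbdef]; linarith
  have hGb : 0 < Real.Gamma b := Real.Gamma_pos_of_pos hb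
  set K0 : ℝ := 2 * (Real.Gamma b * b ^ (1 - b) / b) with hK0def
  refine ⟨max 1 K0, le_max_left _ _, fun x hx => ?_⟩
  have hxpos : (0:ℝ) < x := by linarith
  have ha : 0 < x * b := by positivity
  have hab : x * b + b = (x + 1) * b := by ring
  have key : Real.Gamma (x * b) ≤ Real.Gamma ((x + 1) * b) * ((x + 1) * b) ^ (1 - b) / (x * b) := by
    rw [le_div_iff₀ ha]
    have := Gamma_conv ha hb hb1
    rw [hab] at this
    calc Real.Gamma (x * b) * (x * b) = Real.Gamma (x * b + 1) := by
          rw [Real.Gamma_add_one ha.ne']; ring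
      _ ≤ Real.Gamma ((x + 1) * b) * ((x + 1) * b) ^ (1 - b) := this
  have habpos : (0:ℝ) < (x + 1) * b := by positivity
  have hGab : 0 < Real.Gamma ((x + 1) * b) := Real.Gamma_pos_of_pos habpos
  have step1 : Beta (x * b) b ≤ Real.Gamma b * (((x + 1) * b) ^ (1 - b) / (x * b)) := by
    have hBe : Beta (x * b) b = Real.Gamma (x * b) * Real.Gamma b / Real.Gamma ((x + 1) * b) := by
      rw [Beta_eq ha hb, hab]
    rw [hBe, div_le_iff₀ hGab]
    calc Real.Gamma (x * b) * Real.Gamma b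
        ≤ (Real.Gamma ((x + 1) * b) * ((x + 1) * b) ^ (1 - b) / (x * b)) * Real.Gamma b :=
          mul_le_mul_of_nonneg_right key hGb.le
      _ = Real.Gamma b * (((x + 1) * b) ^ (1 - b) / (x * b)) * Real.Gamma ((x + 1) * b) := by
          ring
  have e1 : ((x + 1) * b) ^ (1 - b) = (x + 1) * ((x + 1) ^ (-b) * b ^ (1 - b)) := by
    rw [Real.mul_rpow (by linarith : (0:ℝ) ≤ x + 1) hb.le,
      show (1:ℝ) - b = 1 + -b by ring, Real.rpow_add (by linarith : (0:ℝ) < x + 1),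
      Real.rpow_one, ← show (1:ℝ) - b = 1 + -b by ring]
    ring
  have e2 : Real.Gamma b * (((x + 1) * b) ^ (1 - b) / (x * b)) =
      ((x + 1) / x) * (Real.Gamma b * b ^ (1 - b) / b) * (x + 1) ^ (-b) := by
    rw [e1]; field_simp
  have hx2 : (x + 1) / x ≤ 2 := by
    rw [div_le_iff₀ hxpos]; linarith
  have hc : 0 ≤ Real.Gamma b * b ^ (1 - b) / b := by positivity
  have hp : (0:ℝ) ≤ (x + 1) ^ (-b) := Real.rpow_nonneg (by linarith) _
  have step2 : Real.Gamma b * (((x + 1) * b) ^ (1 - b) / (x * b)) ≤ K0 * (x + 1) ^ (-b) := by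
    rw [e2, hK0def]
    have := mul_le_mul_of_nonneg_right (mul_le_mul_of_nonneg_right hx2 hc) hp
    linarith [this]
  have hxb : x * γ / 2 = x * b := by rw [hbdef]; ring
  rw [hxb]
  refine (step1.trans step2).trans ?_
  exact mul_le_mul_of_nonneg_right (le_max_right _ _) hp

lemma Ctil_one (γ C Ct : ℝ) : Ctil γ C Ct 1 = Ct := rfl

lemma Cpar_succ (γ C : ℝ) (k : ℕ) (hk : 1 ≤ k) :
    Cpar γ C (k + 1) = C * Cpar γ C k * Beta ((k : ℝ) * γ / 2) (γ / 2) := by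
  obtain ⟨m, rfl⟩ : ∃ m, k = m + 1 := ⟨k - 1, by omega⟩
  simp only [Cpar, Nat.add_sub_cancel]
  rw [Finset.prod_Icc_succ_top (by omega : 1 ≤ m + 1)]
  push_cast
  ring

lemma Ctil_succ (γ C Ct : ℝ) (k : ℕ) (hk : 1 ≤ k) :
    Ctil γ C Ct (k + 1) =
      (Cpar γ C k * Ct + C * Ctil γ C Ct k) * Beta ((k : ℝ) * γ / 2) (γ / 2) := by
  obtain ⟨m, rfl⟩ : ∃ m, k = m + 1 := ⟨k - 1, by omega⟩
  have h : Ctil γ C Ct (m + 2) =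
      (Cpar γ C (m + 1) * Ct + C * Ctil γ C Ct (m + 1)) *
        Beta (((m : ℝ) + 1) * γ / 2) (γ / 2) := rfl
  rw [show m + 1 + 1 = m + 2 from rfl, h]
  push_cast
  ring

set_option maxHeartbeats 1000000 in
/-- Asymptotic bound for the constants `C̃_k`: `C̃_k ≤ k D^k (k!)^{-γ/2}`. -/
theorem tilde_parametrix_constants_bound (γ C Ct : ℝ)
    (hγ : γ ∈ Set.Ioc (0:ℝ) 1) (hC : 0 < C) (hCt : 0 < Ct) :
    ∃ D > (0:ℝ), ∀ k : ℕ, 1 ≤ k →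
      Ctil γ C Ct k ≤ (k : ℝ) * D ^ k * ((k.factorial : ℝ)) ^ (-(γ / 2)) := by
  obtain ⟨hγ0, hγ1⟩ := hγ
  obtain ⟨K, hK1, hK⟩ := Beta_bound hγ0 hγ1
  have hK0 : 0 < K := by linarith
  set D : ℝ := K * (C * K + Ct + C) with hDdef
  have hD0 : 0 < D := by positivity
  have hDalt : D = K * C * K + K * Ct + K * C := by rw [hDdef]; ring
  have p1 : 0 < K * C * K := by positivity
  have p2 : 0 < K * Ct := by positivity
  have p3 : 0 < K * C := by positivity
  have hDCK : C * K ≤ D := by nlinarith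
  have hDKCt : K * Ct ≤ D := by rw [hDalt]; linarith
  have hDKC : K * C ≤ D := by rw [hDalt]; linarith
  have hDCt : Ct ≤ D := by nlinarith
  refine ⟨D, hD0, ?_⟩
  have main : ∀ k : ℕ, 1 ≤ k →
      (0 ≤ Ctil γ C Ct k ∧
        Cpar γ C k ≤ (C * K) ^ k * ((k.factorial : ℝ)) ^ (-(γ / 2)) ∧
        Ctil γ C Ct k ≤ (k : ℝ) * D ^ k * ((k.factorial : ℝ)) ^ (-(γ / 2))) := by
    intro k hk
    induction k, hk using Nat.le_induction with
    | base =>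
      refine ⟨by rw [Ctil_one]; exact hCt.le, ?_, ?_⟩
      · simp [Cpar, Nat.factorial]
        nlinarith
      · rw [Ctil_one]
        simp [Nat.factorial]
        linarith
    | succ k hk ih =>
      obtain ⟨ih0, ihC, ihT⟩ := ih
      have hkR : (1:ℝ) ≤ (k:ℝ) := by exact_mod_cast hk
      have hB := hK (k : ℝ) hkR
      have hBpos : 0 < Beta ((k : ℝ) * γ / 2) (γ / 2) :=
        Beta_pos (by positivity) (by positivity)
      have hfact : (((k+1).factorial : ℝ)) ^ (-(γ / 2)) =
          ((k.factorial : ℝ)) ^ (-(γ / 2)) * ((k:ℝ) + 1) ^ (-(γ / 2)) := by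
        rw [Nat.factorial_succ]
        push_cast
        rw [mul_comm ((k:ℝ) + 1) _, Real.mul_rpow (by positivity) (by positivity)]
      have hCparpos : 0 ≤ Cpar γ C k := by
        unfold Cpar
        refine mul_nonneg (by positivity) (Finset.prod_nonneg fun l hl => ?_)
        simp only [Finset.mem_Icc] at hl
        have hl1 : (1:ℝ) ≤ (l:ℝ) := by exact_mod_cast hl.1
        exact (Beta_pos (by nlinarith) (by positivity)).le
      have hp : (0:ℝ) ≤ ((k:ℝ) + 1) ^ (-(γ / 2)) :=
        Real.rpow_nonneg (by positivity) _
      -- bound for Cpar (k+1)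
      have hCparSucc : Cpar γ C (k+1) ≤ (C * K) ^ (k+1) * (((k+1).factorial : ℝ)) ^ (-(γ / 2)) := by
        rw [Cpar_succ γ C k hk, hfact]
        calc C * Cpar γ C k * Beta ((k : ℝ) * γ / 2) (γ / 2)
            ≤ C * ((C * K) ^ k * ((k.factorial : ℝ)) ^ (-(γ / 2))) *
              (K * ((k:ℝ) + 1) ^ (-(γ / 2))) := by
              refine mul_le_mul ?_ hB hBpos.le (by positivity)
              exact mul_le_mul_of_nonneg_left ihC hC.le
          _ = (C * K) ^ (k+1) * (((k.factorial : ℝ)) ^ (-(γ / 2)) * ((k:ℝ) + 1) ^ (-(γ / 2))) := by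
              ring
      have hsum0 : 0 ≤ Cpar γ C k * Ct + C * Ctil γ C Ct k := by positivity
      have hCtilpos : 0 ≤ Ctil γ C Ct (k+1) := by
        rw [Ctil_succ γ C Ct k hk]
        exact mul_nonneg hsum0 hBpos.le
      refine ⟨hCtilpos, hCparSucc, ?_⟩
      rw [Ctil_succ γ C Ct k hk]
      have hsum : Cpar γ C k * Ct + C * Ctil γ C Ct k ≤
          ((C * K) ^ k * Ct + C * ((k:ℝ) * D ^ k)) * ((k.factorial : ℝ)) ^ (-(γ / 2)) := by
        have h1 : Cpar γ C k * Ct ≤ (C * K) ^ k * ((k.factorial : ℝ)) ^ (-(γ / 2)) * Ct :=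
          mul_le_mul_of_nonneg_right ihC hCt.le
        have h2 : C * Ctil γ C Ct k ≤ C * ((k : ℝ) * D ^ k * ((k.factorial : ℝ)) ^ (-(γ / 2))) :=
          mul_le_mul_of_nonneg_left ihT hC.le
        nlinarith [h1, h2]
      calc (Cpar γ C k * Ct + C * Ctil γ C Ct k) * Beta ((k : ℝ) * γ / 2) (γ / 2)
          ≤ ((C * K) ^ k * Ct + C * ((k:ℝ) * D ^ k)) * ((k.factorial : ℝ)) ^ (-(γ / 2)) *
            (K * ((k:ℝ) + 1) ^ (-(γ / 2))) := by
            refine mul_le_mul hsum hB hBpos.le ?_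
            have : (0:ℝ) ≤ (C * K) ^ k * Ct + C * ((k:ℝ) * D ^ k) := by positivity
            positivity
        _ = (((C * K) ^ k * Ct + C * ((k:ℝ) * D ^ k)) * K) *
            (((k.factorial : ℝ)) ^ (-(γ / 2)) * ((k:ℝ) + 1) ^ (-(γ / 2))) := by ring
        _ ≤ (((k:ℝ) + 1) * D ^ (k+1)) *
            (((k.factorial : ℝ)) ^ (-(γ / 2)) * ((k:ℝ) + 1) ^ (-(γ / 2))) := by
            refine mul_le_mul_of_nonneg_right ?_ (by positivity)
            have hCKD : (C * K) ^ k ≤ D ^ k :=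
              pow_le_pow_left₀ (by positivity) hDCK k
            have hDk : (0:ℝ) < D ^ k := by positivity
            have t1 : (C * K) ^ k * Ct * K ≤ D ^ (k+1) := by
              have h3 : (C * K) ^ k * (Ct * K) ≤ D ^ k * D := by
                refine mul_le_mul hCKD (by linarith [hDKCt]) (by positivity) (by positivity)
              calc (C * K) ^ k * Ct * K = (C * K) ^ k * (Ct * K) := by ring
                _ ≤ D ^ k * D := h3
                _ = D ^ (k+1) := by ring
            have t2 : C * ((k:ℝ) * D ^ k) * K ≤ (k:ℝ) * D ^ (k+1) := by
              have hkk : (0:ℝ) ≤ (k:ℝ) := by positivity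
              calc C * ((k:ℝ) * D ^ k) * K = (k:ℝ) * (D ^ k * (C * K)) := by ring
                _ ≤ (k:ℝ) * (D ^ k * D) := by
                    refine mul_le_mul_of_nonneg_left ?_ hkk
                    exact mul_le_mul_of_nonneg_left hDCK hDk.le
                _ = (k:ℝ) * D ^ (k+1) := by ring
            linarith [t1, t2]
        _ = ((k+1:ℕ):ℝ) * D ^ (k+1) * (((k+1).factorial : ℝ)) ^ (-(γ / 2)) := by
            rw [hfact]; push_cast; ring
  intro k hk
  exact (main k hk).2.2
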